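/- Let S, T > 1 and let σ : ℍ → ℍ be analytic with σ(S·z) = T·σ(z) for all z ∈ ℍ. Then T ≤ S (in particular, if 1 < S < T no such σ exists); if 1 < T < S, then σ(z)/z → 0 as z → ∞ within every Stolz angle; and if T = S, then there exists c > 0 with σ(z) = c·z for all z ∈ ℍ. -/

import Mathlib

open Complex Filter Set Topology

noncomputable section

/-- The upper half-plane `ℍ`, as a subset of `ℂ`. -/
def UHP : Set ℂ := {z : ℂ | 0 < z.im}

/-- The hyperbolic distance `ρ_ℍ` on the upper half-plane. -/
noncomputable def rho (z w : ℂ) : ℝ :=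
  2 * Real.arsinh (‖z - w‖ / (2 * Real.sqrt (z.im * w.im)))

/-- The Stolz angle `{z ∈ ℍ : θ < Arg z < π - θ}` at infinity. -/
def StolzAngle (θ : ℝ) : Set ℂ :=
  {z : ℂ | θ < Complex.arg z ∧ Complex.arg z < Real.pi - θ}

/-- `f(z) → 0` as `z → ∞` within every Stolz angle. -/
def NTLimZeroAtInf (f : ℂ → ℂ) : Prop :=
  ∀ θ : ℝ, 0 < θ → θ < Real.pi / 2 →
    Filter.Tendsto f
      (Filter.comap (fun z : ℂ => ‖z‖) Filter.atTop ⊓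
        Filter.principal (StolzAngle θ))
      (nhds (0 : ℂ))

/-! ### Auxiliary lemmas -/

set_option maxHeartbeats 1000000

lemma ofReal_mul_im' (r : ℝ) (z : ℂ) : (((r:ℝ):ℂ) * z).im = r * z.im := by
  simp [Complex.mul_im]

/-- On the upper half-plane, the Möbius quotient has modulus < 1. -/
lemma uhp_abs_lt {b w : ℂ} (hb : 0 < b.im) (hw : 0 < w.im) :
    ‖(w - b) / (w - (starRingEnd ℂ) b)‖ < 1 := by
  have hne : w - (starRingEnd ℂ) b ≠ 0 := by
    intro h
    have := congrArg Complex.im h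
    simp [Complex.sub_im, Complex.conj_im] at this
    linarith
  rw [norm_div, div_lt_one (norm_pos_iff.mpr hne), Complex.norm_def, Complex.norm_def]
  apply Real.sqrt_lt_sqrt (Complex.normSq_nonneg _)
  simp only [Complex.normSq_apply, Complex.sub_re, Complex.sub_im, Complex.conj_re,
    Complex.conj_im]
  nlinarith

lemma psi_im_pos {ζ : ℂ} (h : ‖ζ‖ < 1) :
    0 < (Complex.I * (1 + ζ) / (1 - ζ)).im := by
  have h1 : (1 : ℂ) - ζ ≠ 0 := by
    intro hz
    have : ζ = 1 := by linear_combination -hz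
    simp [this] at h
  have hns : Complex.normSq ζ < 1 := by
    have := Complex.sq_norm ζ
    nlinarith [norm_nonneg ζ]
  have hpos : 0 < Complex.normSq (1 - ζ) := by rwa [Complex.normSq_pos]
  rw [Complex.div_im, div_sub_div_same]
  apply div_pos _ hpos
  simp only [Complex.mul_im, Complex.mul_re, Complex.I_re, Complex.I_im, Complex.add_re,
    Complex.add_im, Complex.one_re, Complex.one_im, Complex.sub_re, Complex.sub_im,
    Complex.normSq_apply] at *
  nlinarith

lemma sin_ge_sin_of_mem {θ t : ℝ} (h0 : 0 < θ) (h2 : θ ≤ t) (h3 : t ≤ Real.pi - θ) :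
    Real.sin θ ≤ Real.sin t := by
  have hθ2 : θ ≤ Real.pi / 2 := by
    nlinarith [Real.pi_pos]
  rcases le_or_gt t (Real.pi / 2) with ht | ht
  · exact Real.strictMonoOn_sin.monotoneOn ⟨by linarith, hθ2⟩ ⟨by linarith, ht⟩ h2
  · rw [← Real.sin_pi_sub t]
    exact Real.strictMonoOn_sin.monotoneOn ⟨by linarith, hθ2⟩
      ⟨by linarith, by linarith⟩ (by linarith)

/-- Cayley-type map from the unit disk to the upper half-plane. -/
def ψmap (ζ : ℂ) : ℂ := Complex.I * (1 + ζ) / (1 - ζ)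

lemma ψmap_mem {ζ : ℂ} (h : ζ ∈ Metric.ball (0:ℂ) 1) : ψmap ζ ∈ UHP := by
  rw [Metric.mem_ball, dist_zero_right] at h
  exact psi_im_pos h

lemma one_sub_ne {ζ : ℂ} (h : ζ ∈ Metric.ball (0:ℂ) 1) : (1:ℂ) - ζ ≠ 0 := by
  rw [Metric.mem_ball, dist_zero_right] at h
  intro hz
  have : ζ = 1 := by linear_combination -hz
  simp [this] at h

lemma ψmap_diff : DifferentiableOn ℂ ψmap (Metric.ball (0:ℂ) 1) := by
  apply DifferentiableOn.div
  · exact (differentiable_const _|>.mul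
      ((differentiable_const _).add differentiable_id)).differentiableOn
  · exact ((differentiable_const _).sub differentiable_id).differentiableOn
  · intro ζ hζ; exact one_sub_ne hζ

lemma ψmap_zero : ψmap 0 = Complex.I := by simp [ψmap]

lemma cayley_mem {z : ℂ} (hz : z ∈ UHP) :
    (z - Complex.I)/(z + Complex.I) ∈ Metric.ball (0:ℂ) 1 := by
  rw [Metric.mem_ball, dist_zero_right]
  have : z + Complex.I = z - (starRingEnd ℂ) Complex.I := by rw [Complex.conj_I]; ring
  rw [this]
  exact uhp_abs_lt (by simp) hz

lemma z_add_I_ne {z : ℂ} (hz : z ∈ UHP) : z + Complex.I ≠ 0 := by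
  intro h
  have := congrArg Complex.im h
  simp at this
  have hz' : 0 < z.im := hz
  linarith

lemma ψmap_cayley {z : ℂ} (hz : z ∈ UHP) : ψmap ((z - Complex.I)/(z + Complex.I)) = z := by
  have h1 : z + Complex.I ≠ 0 := z_add_I_ne hz
  have h2 : (1:ℂ) - (z - Complex.I)/(z + Complex.I) ≠ 0 := one_sub_ne (cayley_mem hz)
  rw [ψmap, div_eq_iff h2]
  field_simp
  ring

section F
variable {σ : ℂ → ℂ}

/-- The conjugated self-map of the disk. -/
def Fmap (σ : ℂ → ℂ) (ζ : ℂ) : ℂ :=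
  (σ (ψmap ζ) - σ Complex.I) / (σ (ψmap ζ) - (starRingEnd ℂ) (σ Complex.I))

lemma I_mem_UHP : Complex.I ∈ UHP := by simp [UHP]

lemma sub_conj_ne {u v : ℂ} (hu : u ∈ UHP) (hv : v ∈ UHP) :
    u - (starRingEnd ℂ) v ≠ 0 := by
  intro h
  have := congrArg Complex.im h
  simp [Complex.sub_im, Complex.conj_im] at this
  have h1 : 0 < u.im := hu
  have h2 : 0 < v.im := hv
  linarith

lemma Fmap_diff (hm : Set.MapsTo σ UHP UHP) (hd : DifferentiableOn ℂ σ UHP) :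
    DifferentiableOn ℂ (Fmap σ) (Metric.ball (0:ℂ) 1) := by
  have hcomp : DifferentiableOn ℂ (fun ζ => σ (ψmap ζ)) (Metric.ball (0:ℂ) 1) :=
    hd.comp ψmap_diff (fun ζ hζ => ψmap_mem hζ)
  apply DifferentiableOn.div (hcomp.sub (differentiableOn_const _))
    (hcomp.sub (differentiableOn_const _))
  intro ζ hζ
  exact sub_conj_ne (hm (ψmap_mem hζ)) (hm I_mem_UHP)

lemma Fmap_maps (hm : Set.MapsTo σ UHP UHP) :
    Set.MapsTo (Fmap σ) (Metric.ball (0:ℂ) 1) (Metric.ball (0:ℂ) 1) := by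
  intro ζ hζ
  rw [Metric.mem_ball, dist_zero_right]
  exact uhp_abs_lt (hm I_mem_UHP : (0:ℝ) < (σ Complex.I).im) (hm (ψmap_mem hζ))

lemma Fmap_zero : Fmap σ 0 = 0 := by
  rw [Fmap, ψmap_zero, sub_self, zero_div]

/-- Schwarz–Pick inequality for the conjugated map. -/
lemma Fmap_schwarz (hm : Set.MapsTo σ UHP UHP) (hd : DifferentiableOn ℂ σ UHP)
    {ζ : ℂ} (hζ : ‖ζ‖ < 1) :
    ‖Fmap σ ζ‖ ≤ ‖ζ‖ := by
  have h0 : Fmap σ 0 = 0 := Fmap_zero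
  exact Complex.norm_le_norm_of_mapsTo_ball (Fmap_diff hm hd)
    ((Fmap_maps hm).mono_right Metric.ball_subset_closedBall) h0 hζ

end F

/-- Self-maps of `ℍ` intertwining the dilations `z ↦ Sz` and `z ↦ Tz` (`S, T > 1`):
necessarily `T ≤ S`; if `T < S` then `σ(z)/z → 0` nontangentially; and if `T = S` then
`σ(z) = cz` for some `c > 0`. -/
theorem dilation_intertwiners (S T : ℝ) (hS : 1 < S) (hT : 1 < T)
    (σ : ℂ → ℂ)
    (hσmaps : Set.MapsTo σ UHP UHP)
    (hσdiff : DifferentiableOn ℂ σ UHP)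
    (hσeq : ∀ z ∈ UHP, σ ((S : ℂ) * z) = (T : ℂ) * σ z) :
    T ≤ S ∧
    (T < S → NTLimZeroAtInf (fun z => σ z / z)) ∧
    (T = S → ∃ c : ℝ, 0 < c ∧ ∀ z ∈ UHP, σ z = (c : ℂ) * z) := by
  have hS0 : (0:ℝ) < S := by linarith
  have hT0 : (0:ℝ) < T := by linarith
  set b := σ Complex.I with hbdef
  have hbU : b ∈ UHP := hσmaps I_mem_UHP
  have hbim : 0 < b.im := hbU
  have hbne : b ≠ 0 := by intro h; rw [h] at hbim; simp at hbim
  have habsb : 0 < ‖b‖ := norm_pos_iff.mpr hbne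
  set pr : ℝ := (S - 1) / (S + 1) with hprdef
  have hS1 : (0:ℝ) < S + 1 := by linarith
  have hpr0 : 0 < pr := div_pos (by linarith) hS1
  have hpr1 : pr < 1 := by rw [div_lt_one hS1]; linarith
  have habsp : ‖((pr : ℝ) : ℂ)‖ = pr := by
    rw [Complex.norm_real, Real.norm_eq_abs, _root_.abs_of_nonneg hpr0.le]
  have hpball : ‖((pr : ℝ) : ℂ)‖ < 1 := by rw [habsp]; exact hpr1
  have hpmem : ((pr : ℝ) : ℂ) ∈ Metric.ball (0:ℂ) 1 := by
    rw [Metric.mem_ball, dist_zero_right]; exact hpball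
  have hψp : ψmap ((pr : ℝ) : ℂ) = (S : ℂ) * Complex.I := by
    have h2 : (1:ℂ) - ((pr : ℝ) : ℂ) ≠ 0 := one_sub_ne hpmem
    have hSc : ((S:ℂ) + 1) ≠ 0 := by
      intro h; have := congrArg Complex.re h; simp at this; linarith
    rw [ψmap, div_eq_iff h2, hprdef]
    push_cast
    field_simp
    ring
  have hSIeq : σ ((S:ℂ) * Complex.I) = (T:ℂ) * b := hσeq Complex.I I_mem_UHP
  have hTbU : (T:ℂ) * b ∈ UHP := by
    show 0 < ((T:ℂ) * b).im
    rw [ofReal_mul_im']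
    positivity
  have hdenne : (T:ℂ) * b - (starRingEnd ℂ) b ≠ 0 := sub_conj_ne hTbU hbU
  have hdenpos : 0 < ‖(T:ℂ) * b - (starRingEnd ℂ) b‖ := norm_pos_iff.mpr hdenne
  have hkey : ‖((T:ℂ) * b - b) / ((T:ℂ) * b - (starRingEnd ℂ) b)‖ ≤ pr := by
    have h := Fmap_schwarz hσmaps hσdiff hpball
    rw [Fmap, hψp, hSIeq, habsp] at h
    exact h
  have hnum : ‖(T:ℂ) * b - b‖ = (T - 1) * ‖b‖ := by
    rw [show (T:ℂ) * b - b = (((T - 1 : ℝ)) : ℂ) * b by push_cast; ring, norm_mul,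
      Complex.norm_real, Real.norm_eq_abs, _root_.abs_of_nonneg (by linarith)]
  have h1 : (T - 1) * ‖b‖ ≤ pr * ‖(T:ℂ) * b - (starRingEnd ℂ) b‖ := by
    rw [norm_div, div_le_iff₀ hdenpos, hnum] at hkey
    exact hkey
  have hden_le : ‖(T:ℂ) * b - (starRingEnd ℂ) b‖ ≤ (T + 1) * ‖b‖ := by
    calc ‖(T:ℂ) * b - (starRingEnd ℂ) b‖
        ≤ ‖(T:ℂ) * b‖ + ‖(starRingEnd ℂ) b‖ := by
          simpa using norm_sub_le ((T:ℂ) * b) ((starRingEnd ℂ) b)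
      _ = (T + 1) * ‖b‖ := by
          rw [norm_mul, Complex.norm_real, Real.norm_eq_abs, Complex.norm_conj, _root_.abs_of_pos hT0]; ring
  have hTS : T ≤ S := by
    have h2 : (T - 1) * ‖b‖ ≤ pr * ((T + 1) * ‖b‖) :=
      h1.trans (mul_le_mul_of_nonneg_left hden_le hpr0.le)
    have h3 : T - 1 ≤ pr * (T + 1) := by nlinarith [h2, habsb]
    have h4 : pr * (S + 1) = S - 1 := div_mul_cancel₀ _ (ne_of_gt hS1)
    nlinarith [mul_le_mul_of_nonneg_right h3 hS1.le]
  refine ⟨hTS, ?_, ?_⟩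
  · -- Part 2
    intro hTlt θ hθ0 hθ2
    have hπ := Real.pi_pos
    set s := Real.sin θ with hsdef
    have hs0 : 0 < s := Real.sin_pos_of_pos_of_lt_pi hθ0 (by linarith)
    have hstolz : ∀ z ∈ StolzAngle θ, s * ‖z‖ ≤ z.im := by
      intro z hz
      obtain ⟨hz1, hz2⟩ := hz
      have hzne : z ≠ 0 := by
        intro h; rw [h] at hz1; simp [Complex.arg_zero] at hz1; linarith
      have habs : 0 < ‖z‖ := norm_pos_iff.mpr hzne
      have hsin : Real.sin θ ≤ Real.sin (Complex.arg z) :=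
        sin_ge_sin_of_mem hθ0 hz1.le (by linarith)
      rw [Complex.sin_arg] at hsin
      calc s * ‖z‖ ≤ (z.im / ‖z‖) * ‖z‖ :=
            mul_le_mul_of_nonneg_right hsin habs.le
        _ = z.im := div_mul_cancel₀ _ (ne_of_gt habs)
    set K : Set ℂ :=
      {w : ℂ | 1 ≤ ‖w‖ ∧ ‖w‖ ≤ S ∧ s * ‖w‖ ≤ w.im} with hKdef
    have hKU : K ⊆ UHP := by
      intro w hw
      obtain ⟨hw1, hw2, hw3⟩ := hw
      show 0 < w.im
      nlinarith
    have hKcl : IsClosed K := by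
      have hA : IsClosed {w : ℂ | 1 ≤ ‖w‖} :=
        isClosed_le continuous_const continuous_norm
      have hB : IsClosed {w : ℂ | ‖w‖ ≤ S} :=
        isClosed_le continuous_norm continuous_const
      have hC : IsClosed {w : ℂ | s * ‖w‖ ≤ w.im} :=
        isClosed_le (continuous_const.mul continuous_norm) Complex.continuous_im
      exact hA.inter (hB.inter hC)
    have hKb : Bornology.IsBounded K := by
      apply (Metric.isBounded_closedBall (x := (0:ℂ)) (r := S)).subset
      intro w hw
      rw [Metric.mem_closedBall, dist_zero_right]
      exact hw.2.1
    have hKc : IsCompact K := Metric.isCompact_of_isClosed_isBounded hKcl hKb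
    obtain ⟨C, hC⟩ := hKc.exists_bound_of_continuousOn (hσdiff.continuousOn.mono hKU)
    set M := max C 1 with hMdef
    have hM0 : 0 < M := lt_of_lt_of_le one_pos (le_max_right _ _)
    have hMC : ∀ w ∈ K, ‖σ w‖ ≤ M := fun w hw =>
      le_trans (by simpa using hC w hw) (le_max_left _ _)
    have hiter : ∀ (n : ℕ), ∀ z ∈ UHP, σ ((S:ℂ)^n * z) = (T:ℂ)^n * σ z := by
      intro n
      induction n with
      | zero => intro z hz; simp
      | succ n ih =>
        intro z hz
        have hz' : 0 < z.im := hz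
        have hzn : (S:ℂ)^n * z ∈ UHP := by
          show 0 < ((S:ℂ)^n * z).im
          rw [← Complex.ofReal_pow, ofReal_mul_im']
          exact mul_pos (pow_pos hS0 n) hz'
        calc σ ((S:ℂ)^(n+1) * z) = σ ((S:ℂ) * ((S:ℂ)^n * z)) := by ring_nf
          _ = (T:ℂ) * σ ((S:ℂ)^n * z) := hσeq _ hzn
          _ = (T:ℂ) * ((T:ℂ)^n * σ z) := by rw [ih z hz]
          _ = (T:ℂ)^(n+1) * σ z := by ring
    rw [Metric.tendsto_nhds]
    intro ε hε
    have hr1 : 0 ≤ T / S := by positivity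
    have hr2 : T / S < 1 := (div_lt_one hS0).mpr hTlt
    have htend : Tendsto (fun n : ℕ => (T/S)^n * M) atTop (nhds 0) := by
      simpa using (tendsto_pow_atTop_nhds_zero_of_lt_one hr1 hr2).mul_const M
    obtain ⟨N, hN⟩ := (htend.eventually_lt_const hε).exists
    have hev : ∀ᶠ z : ℂ in comap (fun z : ℂ => ‖z‖) atTop,
        S^N ≤ ‖z‖ :=
      tendsto_comap.eventually (eventually_ge_atTop (S^N))
    rw [eventually_inf_principal]
    filter_upwards [hev] with z hzR hzSt
    have habsz1 : 1 ≤ ‖z‖ := le_trans (one_le_pow₀ hS.le) hzR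
    have habsz : 0 < ‖z‖ := lt_of_lt_of_le one_pos habsz1
    have hzU : z ∈ UHP := by
      have := hstolz z hzSt
      show 0 < z.im
      nlinarith
    set n := ⌊Real.logb S (‖z‖)⌋₊ with hndef
    have hSne1 : S ≠ 1 := ne_of_gt hS
    have hLx : S ^ (Real.logb S (‖z‖)) = ‖z‖ :=
      Real.rpow_logb hS0 hSne1 habsz
    have hL0 : 0 ≤ Real.logb S (‖z‖) := Real.logb_nonneg hS habsz1
    have hlow : S ^ n ≤ ‖z‖ := by
      calc S ^ n = S ^ ((n : ℝ)) := (Real.rpow_natCast S n).symm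
        _ ≤ S ^ (Real.logb S (‖z‖)) :=
            (Real.rpow_le_rpow_left_iff hS).mpr (Nat.floor_le hL0)
        _ = ‖z‖ := hLx
    have hhigh : ‖z‖ < S ^ (n+1) := by
      calc ‖z‖ = S ^ (Real.logb S (‖z‖)) := hLx.symm
        _ < S ^ (((n+1 : ℕ) : ℝ)) := by
            apply (Real.rpow_lt_rpow_left_iff hS).mpr
            push_cast
            exact Nat.lt_floor_add_one _
        _ = S ^ (n+1) := Real.rpow_natCast _ _
    have hnN : N ≤ n := by
      apply Nat.le_floor
      have hh : S ^ ((N : ℝ)) ≤ S ^ (Real.logb S (‖z‖)) := by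
        rw [Real.rpow_natCast, hLx]; exact hzR
      exact (Real.rpow_le_rpow_left_iff hS).mp hh
    have hSn0 : (0:ℝ) < S^n := pow_pos hS0 n
    set w : ℂ := (((S^n : ℝ))⁻¹ : ℝ) * z with hwdef
    have habsw : ‖w‖ = (S^n)⁻¹ * ‖z‖ := by
      rw [hwdef, norm_mul, Complex.norm_real, Real.norm_eq_abs, _root_.abs_of_pos (inv_pos.mpr hSn0)]
    have hwim : w.im = (S^n)⁻¹ * z.im := by rw [hwdef, ofReal_mul_im']
    have hwK : w ∈ K := by
      refine ⟨?_, ?_, ?_⟩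
      · rw [habsw, inv_mul_eq_div, le_div_iff₀ hSn0]
        simpa using hlow
      · rw [habsw, inv_mul_eq_div, div_le_iff₀ hSn0]
        have hsucc : S^(n+1) = S * S^n := by ring
        linarith [hhigh]
      · rw [habsw, hwim]
        have hst := hstolz z hzSt
        calc s * ((S^n)⁻¹ * ‖z‖) = (S^n)⁻¹ * (s * ‖z‖) := by ring
          _ ≤ (S^n)⁻¹ * z.im :=
              mul_le_mul_of_nonneg_left hst (inv_pos.mpr hSn0).le
    have hwU : w ∈ UHP := hKU hwK
    have hzw : (S:ℂ)^n * w = z := by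
      rw [hwdef]
      have hcast : ((((S^n : ℝ))⁻¹ : ℝ) : ℂ) = ((S:ℂ)^n)⁻¹ := by push_cast; ring
      rw [hcast]
      have : ((S:ℂ)^n) ≠ 0 := by
        apply pow_ne_zero
        exact_mod_cast ne_of_gt hS0
      field_simp
    have hσz : σ z = (T:ℂ)^n * σ w := by rw [← hzw, hiter n w hwU]
    rw [dist_zero_right, norm_div, hσz, norm_mul]
    have hTn : ‖(T:ℂ)^n‖ = T^n := by
      rw [norm_pow, Complex.norm_real, Real.norm_eq_abs, _root_.abs_of_pos hT0]
    rw [hTn]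
    have hσwM : ‖σ w‖ ≤ M := hMC w hwK
    calc T^n * ‖σ w‖ / ‖z‖ ≤ T^n * M / S^n := by
          apply div_le_div₀ (by positivity)
            (mul_le_mul_of_nonneg_left hσwM (by positivity)) hSn0 hlow
      _ = (T/S)^n * M := by rw [div_pow]; ring
      _ ≤ (T/S)^N * M :=
          mul_le_mul_of_nonneg_right (pow_le_pow_of_le_one hr1 hr2.le hnN) hM0.le
      _ < ε := hN
  · -- Part 3
    intro hTSeq
    subst hTSeq
    have h5 : (T + 1) * ‖b‖ ≤ ‖(T:ℂ) * b - (starRingEnd ℂ) b‖ := by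
      have h4 : pr * (T + 1) = T - 1 := div_mul_cancel₀ _ (ne_of_gt hS1)
      nlinarith [mul_le_mul_of_nonneg_right h1 hS1.le, hdenpos]
    have hre : b.re = 0 := by
      have h6 : ((T + 1) * ‖b‖)^2 ≤ (‖(T:ℂ) * b - (starRingEnd ℂ) b‖)^2 :=
        pow_le_pow_left₀ (by positivity) h5 2
      rw [mul_pow, Complex.sq_norm, Complex.sq_norm] at h6
      simp only [Complex.normSq_apply, Complex.sub_re, Complex.sub_im, Complex.mul_re,
        Complex.mul_im, Complex.conj_re, Complex.conj_im, Complex.ofReal_re,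
        Complex.ofReal_im] at h6
      have h7 : b.re^2 ≤ 0 := by nlinarith
      exact sq_eq_zero_iff.mp (le_antisymm h7 (sq_nonneg _))
    set c := b.im with hcdef
    have hbc : b = (c : ℂ) * Complex.I := by
      apply Complex.ext <;> simp [hre, hcdef]
    refine ⟨c, hbim, ?_⟩
    have hconj : (starRingEnd ℂ) ((c:ℂ) * Complex.I) = -((c:ℂ) * Complex.I) := by
      simp
    have hFp : Fmap σ ((pr : ℝ) : ℂ) = ((pr : ℝ) : ℂ) := by
      rw [Fmap, hψp, hSIeq, ← hbdef]
      rw [div_eq_iff hdenne]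
      rw [hbc, hconj]
      have h4 : pr * (T + 1) = T - 1 := div_mul_cancel₀ _ (ne_of_gt hS1)
      have hprc : ((pr : ℝ) : ℂ) * ((T:ℂ) + 1) = (T:ℂ) - 1 := by
        have := congrArg (fun x : ℝ => (x : ℂ)) h4
        push_cast at this
        exact this
      linear_combination -(((c : ℝ) : ℂ) * Complex.I * hprc)
    have hpne : ((pr : ℝ) : ℂ) ≠ 0 := by
      simp only [ne_eq, Complex.ofReal_eq_zero]
      exact ne_of_gt hpr0
    have hdsl : dslope (Fmap σ) 0 ((pr : ℝ) : ℂ) = 1 := by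
      rw [dslope_of_ne _ hpne, slope_def_field, hFp, Fmap_zero, sub_zero,
        div_self hpne]
    have haff := Complex.affine_of_mapsTo_ball_of_exists_norm_dslope_eq_div
      (Fmap_diff hσmaps hσdiff)
      (by rw [Fmap_zero]; exact (Fmap_maps hσmaps).mono_right Metric.ball_subset_closedBall) hpmem
      (by rw [hdsl]; norm_num)
    intro z hzU
    have hζball := cayley_mem hzU
    have hFζ : Fmap σ ((z - Complex.I)/(z + Complex.I)) = (z - Complex.I)/(z + Complex.I) := by
      have h := haff hζball
      simpa [Fmap_zero, hdsl] using h
    rw [Fmap, ψmap_cayley hzU, ← hbdef] at hFζ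
    have hσzU : σ z ∈ UHP := hσmaps hzU
    have hne1 : σ z - (starRingEnd ℂ) b ≠ 0 := sub_conj_ne hσzU hbU
    have hne2 : z + Complex.I ≠ 0 := z_add_I_ne hzU
    have hcross := (div_eq_div_iff hne1 hne2).mp hFζ
    rw [hbc, hconj] at hcross
    have h2I : (2 * Complex.I : ℂ) ≠ 0 := by
      simp [Complex.I_ne_zero]
    apply mul_left_cancel₀ h2I
    linear_combination hcross
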